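/- arXiv:1110.6755 — 4 statements merged into one kernel-verified Lean document; each statement's English description precedes it below -/
import Mathlib

section
/- Let x_1 = 0 and x_2, ..., x_n be arbitrary real numbers, n ≥ 2, and α > 0. Then (Σ_{i=1}^n x_i e^{-α x_i}) / (Σ_{j=1}^n e^{-α x_j}) ≤ ln(n)/α. -/
lemma aux_u_exp_neg (u : ℝ) : u * Real.exp (-u) ≤ Real.exp (-1) := by
  have h := Real.add_one_le_exp (u - 1)
  calc u * Real.exp (-u) ≤ Real.exp (u - 1) * Real.exp (-u) :=
        mul_le_mul_of_nonneg_right (by linarith) (Real.exp_nonneg _)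
    _ = Real.exp (-1) := by rw [← Real.exp_add]; ring_nf

theorem softmin_weighted_average_le
    (n : ℕ) (hn : 2 ≤ n) (x : Fin n → ℝ) (hx0 : x ⟨0, by omega⟩ = 0)
    (α : ℝ) (hα : 0 < α) :
    (∑ i, x i * Real.exp (-α * x i)) / (∑ j, Real.exp (-α * x j)) ≤ Real.log n / α := by
  set c : ℝ := Real.log n / α with hc
  have hnpos : (0:ℝ) < n := by positivity
  have hn2 : (2:ℝ) ≤ n := by exact_mod_cast hn
  have hdenom : 0 < ∑ j, Real.exp (-α * x j) :=
    Finset.sum_pos (fun j _ => Real.exp_pos _) ⟨⟨0, by omega⟩, Finset.mem_univ _⟩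
  rw [div_le_iff₀ hdenom]
  have key : ∑ i, (x i - c) * Real.exp (-α * x i) ≤ 0 := by
    set i0 : Fin n := ⟨0, by omega⟩
    have hmem : i0 ∈ Finset.univ := Finset.mem_univ i0
    rw [← Finset.add_sum_erase _ _ hmem]
    have h0 : (x i0 - c) * Real.exp (-α * x i0) = -c := by
      rw [hx0]; simp
    have hbound : ∀ i ∈ Finset.univ.erase i0,
        (x i - c) * Real.exp (-α * x i) ≤ Real.exp (-1) / (α * n) := by
      intro i _
      have hu := aux_u_exp_neg (α * (x i - c))
      have hexp : Real.exp (-(α * (x i - c))) = Real.exp (-α * x i) * n := by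
        have : -(α * (x i - c)) = -α * x i + Real.log n := by
          have hαc : α * c = Real.log n := by rw [hc]; field_simp [hα.ne']
          linear_combination hαc
        rw [this, Real.exp_add, Real.exp_log hnpos]
      rw [hexp] at hu
      rw [le_div_iff₀ (by positivity : (0:ℝ) < α * n)]
      nlinarith [hu]
    have hsum := Finset.sum_le_sum hbound
    have hcard : (Finset.univ.erase i0).card = n - 1 := by
      rw [Finset.card_erase_of_mem hmem, Finset.card_univ, Fintype.card_fin]
    rw [Finset.sum_const, hcard] at hsum
    have hlog : Real.exp (-1) ≤ Real.log n := by
      have h1 : Real.exp (-1) ≤ 0.37 := by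
        rw [Real.exp_neg]
        rw [inv_le_comm₀ (Real.exp_pos 1) (by norm_num)]
        nlinarith [Real.exp_one_gt_d9]
      have h2 : (0.6931471803 : ℝ) < Real.log 2 := Real.log_two_gt_d9
      have h3 : Real.log 2 ≤ Real.log n := Real.log_le_log (by norm_num) hn2
      linarith
    have hnm : ((n - 1 : ℕ) : ℝ) = (n:ℝ) - 1 := by
      push_cast [Nat.cast_sub (by omega : 1 ≤ n)]; ring
    have hfinal : ((n:ℝ) - 1) * (Real.exp (-1) / (α * n)) ≤ c := by
      have h : ((n:ℝ)-1) * (Real.exp (-1) / (α * n)) = (((n:ℝ)-1) * Real.exp (-1)) / (α * n) := by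
        ring
      rw [h, hc, div_le_div_iff₀ (by positivity) hα]
      have hlogpos : (0:ℝ) ≤ Real.log n := le_trans (Real.exp_pos (-1)).le hlog
      nlinarith [mul_le_mul_of_nonneg_left hlog (by nlinarith : (0:ℝ) ≤ α * ((n:ℝ)-1)),
        mul_nonneg hα.le hlogpos]
    rw [nsmul_eq_mul, hnm] at hsum
    linarith [h0, hsum, hfinal]
  have expand : ∑ i, (x i - c) * Real.exp (-α * x i)
      = (∑ i, x i * Real.exp (-α * x i)) - c * ∑ j, Real.exp (-α * x j) := by
    rw [Finset.mul_sum, ← Finset.sum_sub_distrib]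
    congr 1; ext i; ring
  rw [expand] at key
  linarith
end

section
/- For any n ≥ 2 and any y > 0, ((n-1) y ln(1/y)) / (1 + (n-1) y) ≤ ln n. -/
theorem key_single_variable_inequality
    (n : ℕ) (hn : 2 ≤ n) (y : ℝ) (hy : 0 < y) :
    ((n - 1 : ℝ) * y * Real.log (1 / y)) / (1 + (n - 1 : ℝ) * y) ≤ Real.log n := by
  have hn2 : (2:ℝ) ≤ n := by exact_mod_cast hn
  have hnpos : (0:ℝ) < n := by linarith
  set c : ℝ := (n:ℝ) - 1 with hc
  have hc1 : 1 ≤ c := by simp only [hc]; linarith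
  have hcpos : 0 < c := by linarith
  have hden : 0 < 1 + c * y := by positivity
  rw [div_le_iff₀ hden]
  have hlog1 : Real.log (1/y) = Real.log (1/((n:ℝ)*y)) + Real.log n := by
    rw [← Real.log_mul (by positivity) (by positivity)]
    congr 1
    field_simp
  have hlog2 : Real.log (1/((n:ℝ)*y)) ≤ (1/(2*(n:ℝ)*y) - 1) + Real.log 2 := by
    have heq : Real.log (1/((n:ℝ)*y)) = Real.log (1/(2*(n:ℝ)*y)) + Real.log 2 := by
      rw [← Real.log_mul (by positivity) (by norm_num)]
      congr 1; field_simp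
    rw [heq]
    have := Real.log_le_sub_one_of_pos (show (0:ℝ) < 1/(2*(n:ℝ)*y) by positivity)
    linarith
  have hlog2' : Real.log 2 ≤ Real.log n := Real.log_le_log (by norm_num) hn2
  have hln2 : (1:ℝ)/2 < Real.log 2 := by
    have := Real.log_two_gt_d9; linarith
  have key : c * y * Real.log (1/((n:ℝ)*y)) ≤ Real.log n := by
    have h1 : c * y * Real.log (1/((n:ℝ)*y)) ≤ c * y * ((1/(2*(n:ℝ)*y) - 1) + Real.log 2) :=
      mul_le_mul_of_nonneg_left hlog2 (by positivity)
    have h2 : c * y * ((1/(2*(n:ℝ)*y) - 1) + Real.log 2) = c/(2*n) + c*y*(Real.log 2 - 1) := by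
      field_simp; ring
    have h3 : c*y*(Real.log 2 - 1) ≤ 0 := by
      apply mul_nonpos_of_nonneg_of_nonpos (by positivity)
      have : Real.log 2 < 1 := by
        have := Real.log_two_lt_d9; linarith
      linarith
    have h4 : c/(2*(n:ℝ)) ≤ 1/2 := by
      rw [div_le_div_iff₀ (by positivity) (by norm_num)]
      simp only [hc]; linarith
    nlinarith [h1, h2, h3, h4, hln2, hlog2']
  calc c * y * Real.log (1/y) = c*y*Real.log (1/((n:ℝ)*y)) + c*y*Real.log n := by
        rw [hlog1]; ring
    _ ≤ Real.log n + c*y*Real.log n := by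
        have hlnn : 0 ≤ Real.log n := by linarith
        have : 0 ≤ c*y*Real.log n := by positivity
        linarith
    _ = Real.log n * (1 + c*y) := by ring
end

section
/- Let X be a random variable with E[X] = 0, X ≤ C almost surely, and E[X²] = v. Then for any λ ∈ [0, 1/C], E[e^{λX}] ≤ e^{(e-2) λ² v}. -/
open MeasureTheory Nat

private lemma real_exp_eq_tsum (x : ℝ) : Real.exp x = ∑' n : ℕ, x ^ n / n ! := by
  rw [Real.exp_eq_exp_ℝ, NormedSpace.exp_eq_tsum_div]

private lemma exp_decomp (y : ℝ) :
    Real.exp y = 1 + y + ∑' n : ℕ, y ^ (n + 2) / (n + 2)! := by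
  have hs : Summable (fun n : ℕ => y ^ n / n !) := Real.summable_pow_div_factorial y
  have hs1 : Summable (fun n : ℕ => y ^ (n + 1) / (n + 1)!) :=
    (summable_nat_add_iff 1).2 hs
  rw [real_exp_eq_tsum, Summable.tsum_eq_zero_add hs, Summable.tsum_eq_zero_add hs1]
  norm_num [Nat.factorial]
  ring

set_option maxHeartbeats 1000000 in
private lemma exp_quad_bound {t : ℝ} (ht : t ≤ 1) :
    Real.exp t ≤ 1 + t + (Real.exp 1 - 2) * t ^ 2 := by
  have hE := Real.exp_one_gt_d9
  rcases le_or_gt 0 t with h0 | h0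
  · -- series argument on [0,1]
    have htail : ∀ y : ℝ, Summable (fun n : ℕ => y ^ (n + 2) / (n + 2)!) := fun y =>
      (summable_nat_add_iff 2).2 (Real.summable_pow_div_factorial y)
    have h1 : (∑' n : ℕ, (1 : ℝ) ^ (n + 2) / (n + 2)!) = Real.exp 1 - 2 := by
      have := exp_decomp 1
      norm_num at this ⊢
      linarith
    have hterm : ∀ n : ℕ, t ^ (n + 2) / (n + 2)! ≤ t ^ 2 * ((1 : ℝ) ^ (n + 2) / (n + 2)!) := by
      intro n
      rw [one_pow, mul_one_div]
      have hp : t ^ (n + 2) ≤ t ^ 2 := pow_le_pow_of_le_one h0 ht (by omega)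
      have hf : (0 : ℝ) < (n + 2)! := by positivity
      gcongr
    calc Real.exp t = 1 + t + ∑' n : ℕ, t ^ (n + 2) / (n + 2)! := exp_decomp t
      _ ≤ 1 + t + ∑' n : ℕ, t ^ 2 * ((1 : ℝ) ^ (n + 2) / (n + 2)!) := by
          have := Summable.tsum_le_tsum hterm (htail t) ((htail 1).mul_left (t ^ 2))
          linarith
      _ = 1 + t + (Real.exp 1 - 2) * t ^ 2 := by rw [tsum_mul_left, h1]; ring
  · rcases le_or_gt (-1) t with hm1 | hm1
    · -- -1 ≤ t < 0 : Taylor remainder bound with n = 4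
      have habs : |t| ≤ 1 := by rw [abs_le]; constructor <;> linarith
      have hb := Real.exp_bound habs (n := 4) (by norm_num)
      rw [abs_le] at hb
      have hsum : (∑ i ∈ Finset.range 4, t ^ i / i !) = 1 + t + t ^ 2 / 2 + t ^ 3 / 6 := by
        norm_num [Finset.sum_range_succ, Nat.factorial]
        try ring
      have habs4 : |t| ^ 4 = t ^ 4 := by
        rw [← abs_pow, abs_of_nonneg (by positivity)]
      have hub : Real.exp t ≤ 1 + t + t ^ 2 / 2 + t ^ 3 / 6 + t ^ 4 * (5 / 96) := by
        have h := hb.2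
        rw [hsum, habs4] at h
        norm_num [Nat.factorial] at h
        linarith
      have h3 : t ^ 3 ≤ 0 := by nlinarith [sq_nonneg t]
      have h4 : t ^ 4 ≤ t ^ 2 := by nlinarith [sq_nonneg t, sq_nonneg (t + 1), sq_nonneg (t - 1)]
      nlinarith [sq_nonneg t]
    · -- t < -1
      have hle : Real.exp t ≤ Real.exp (-1) := by
        apply Real.exp_le_exp.2
        linarith
      have hinv : Real.exp (-1) * Real.exp 1 = 1 := by
        rw [← Real.exp_add]; norm_num
      have hpos : 0 < Real.exp (-1) := Real.exp_pos _
      nlinarith [sq_nonneg (t + 1), mul_pos hpos (Real.exp_pos 1), sq_nonneg t]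

/-- One-step Bernstein MGF bound: if `E[X] = 0`, `X ≤ C` a.s. and `E[X²] = v`, then for
`λ ∈ [0, 1/C]`, `E[exp (λ X)] ≤ exp ((e-2) λ² v)`. -/
theorem one_step_bernstein_mgf {Ω : Type*} [MeasurableSpace Ω]
    (P : Measure Ω) [IsProbabilityMeasure P]
    (X : Ω → ℝ) (hXmeas : Measurable X)
    (hXint : Integrable X P) (hXsqint : Integrable (fun ω => X ω ^ 2) P)
    (C : ℝ) (hC : 0 < C) (hXle : ∀ᵐ ω ∂P, X ω ≤ C)
    (hmean : ∫ ω, X ω ∂P = 0)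
    (v : ℝ) (hv : ∫ ω, X ω ^ 2 ∂P = v)
    (lam : ℝ) (hlam0 : 0 ≤ lam) (hlam1 : lam ≤ 1 / C) :
    ∫ ω, Real.exp (lam * X ω) ∂P ≤ Real.exp ((Real.exp 1 - 2) * lam ^ 2 * v) := by
  set E2 := Real.exp 1 - 2 with hE2
  have hbound : ∀ᵐ ω ∂P, Real.exp (lam * X ω) ≤ 1 + lam * X ω + E2 * (lam * X ω) ^ 2 := by
    filter_upwards [hXle] with ω hω
    apply exp_quad_bound
    calc lam * X ω ≤ lam * C := mul_le_mul_of_nonneg_left hω hlam0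
      _ ≤ (1 / C) * C := mul_le_mul_of_nonneg_right hlam1 hC.le
      _ = 1 := by field_simp
  have hg : Integrable (fun ω => 1 + lam * X ω + E2 * (lam * X ω) ^ 2) P := by
    have h1 : Integrable (fun ω => 1 + lam * X ω) P :=
      (integrable_const 1).add (hXint.const_mul lam)
    have h2 : (fun ω => 1 + lam * X ω + E2 * (lam * X ω) ^ 2)
        = fun ω => (1 + lam * X ω) + (E2 * lam ^ 2) * X ω ^ 2 := by
      ext ω; ring
    rw [h2]
    exact h1.add (hXsqint.const_mul (E2 * lam ^ 2))
  have hfint : Integrable (fun ω => Real.exp (lam * X ω)) P := by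
    apply Integrable.mono' hg ((hXmeas.const_mul lam).exp.aestronglyMeasurable)
    filter_upwards [hbound] with ω h
    rw [Real.norm_eq_abs, abs_of_pos (Real.exp_pos _)]
    exact h
  have h1 : ∫ ω, Real.exp (lam * X ω) ∂P
      ≤ ∫ ω, (1 + lam * X ω + E2 * (lam * X ω) ^ 2) ∂P :=
    integral_mono_ae hfint hg hbound
  have h2 : ∫ ω, (1 + lam * X ω + E2 * (lam * X ω) ^ 2) ∂P = 1 + E2 * lam ^ 2 * v := by
    have heq : (fun ω => 1 + lam * X ω + E2 * (lam * X ω) ^ 2)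
        = fun ω => 1 + (lam * X ω + (E2 * lam ^ 2) * X ω ^ 2) := by ext ω; ring
    have e1 : ∫ ω, (lam * X ω + (E2 * lam ^ 2) * X ω ^ 2) ∂P
        = lam * (∫ ω, X ω ∂P) + (E2 * lam ^ 2) * ∫ ω, X ω ^ 2 ∂P := by
      rw [integral_add (hXint.const_mul lam) (hXsqint.const_mul (E2 * lam ^ 2)),
        integral_const_mul, integral_const_mul]
    have e2 : ∫ ω, (1 + (lam * X ω + (E2 * lam ^ 2) * X ω ^ 2)) ∂P
        = (∫ _ω, (1 : ℝ) ∂P) + ∫ ω, (lam * X ω + (E2 * lam ^ 2) * X ω ^ 2) ∂P :=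
      integral_add (integrable_const 1)
        ((hXint.const_mul lam).add (hXsqint.const_mul (E2 * lam ^ 2)))
    rw [heq, e2, e1, hmean, hv]
    simp
  have h3 := Real.add_one_le_exp (E2 * lam ^ 2 * v)
  linarith
end

section
/- Fix a finite index set H, a filtration (F_t), and for each h ∈ H a martingale difference sequence X_t(h) adapted so that E[X_t(h) | F_{t-1}] = 0 and |X_t(h)| ≤ C_t a.s., where (C_t) is a deterministic increasing sequence. Let M_t(h) = Σ_{τ≤t} X_τ(h), V_t(h) = Σ_{τ≤t} E[X_τ(h)² | F_{τ-1}], and for a probability distribution ρ on H write M_t(ρ) = E_{h∼ρ}[M_t(h)], V_t(ρ) = E_{h∼ρ}[V_t(h)]. Fix deterministic 'prior' distributions μ_t on H and positive numbers λ_t with λ_t ≤ 1/C_t. Then with probability at least 1 - δ, simultaneously for all t ≥ 1 and all distributions ρ_t on H: |M_t(ρ_t)| ≤ (KL(ρ_t‖μ_t) + 2 ln(t+1) + ln(2/δ))/λ_t + (e-2) λ_t V_t(ρ_t). -/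
open MeasureTheory Finset

lemma exp_series (x : ℝ) : Real.exp x = ∑' n : ℕ, x ^ n / n.factorial := by
  rw [Real.exp_eq_exp_ℝ, NormedSpace.exp_eq_tsum_div]

lemma exp_quad {x : ℝ} (hx : |x| ≤ 1) :
    Real.exp x ≤ 1 + x + (Real.exp 1 - 2) * x ^ 2 := by
  have hsum : ∀ y : ℝ, Summable (fun n : ℕ => y ^ n / n.factorial) :=
    Real.summable_pow_div_factorial
  have hshift : ∀ y : ℝ, Summable (fun n : ℕ => y ^ (n + 2) / (n + 2).factorial) := by
    intro y
    exact ((summable_nat_add_iff 2).2 (hsum y))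
  have key : ∀ y : ℝ, Real.exp y = 1 + y + ∑' n : ℕ, y ^ (n + 2) / (n + 2).factorial := by
    intro y
    rw [exp_series y, Summable.tsum_eq_zero_add (hsum y)]
    have : ∑' n : ℕ, y ^ (n + 1) / (n + 1).factorial
        = y + ∑' n : ℕ, y ^ (n + 2) / (n + 2).factorial := by
      rw [Summable.tsum_eq_zero_add ((summable_nat_add_iff 1).2 (hsum y))]
      simp
    rw [this]
    simp [Nat.factorial]
    ring
  have h1 : (Real.exp 1 - 2) = ∑' n : ℕ, (1:ℝ) / (n + 2).factorial := by
    have := key 1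
    simp only [one_pow] at this
    linarith
  rw [key x, h1]
  have hle : ∑' n : ℕ, x ^ (n + 2) / (n + 2).factorial
      ≤ ∑' n : ℕ, x ^ 2 / (n + 2).factorial := by
    refine (hshift x).tsum_le_tsum ?_ ?_
    swap
    · exact (Summable.mul_left (x^2)) (by simpa using ((summable_nat_add_iff 2).2 (hsum 1)))
    · intro n
      apply div_le_div_of_nonneg_right _ (by positivity)
      calc x ^ (n + 2) ≤ |x ^ (n + 2)| := le_abs_self _
        _ = |x| ^ n * |x| ^ 2 := by rw [abs_pow]; ring
        _ ≤ 1 * |x| ^ 2 := by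
            apply mul_le_mul_of_nonneg_right (pow_le_one₀ (abs_nonneg x) hx) (by positivity)
        _ = x ^ 2 := by rw [one_mul, sq_abs]
  have heq : ∑' n : ℕ, x ^ 2 / (n + 2).factorial
      = (∑' n : ℕ, (1:ℝ) / (n + 2).factorial) * x ^ 2 := by
    rw [← tsum_mul_right]
    congr 1 with n; ring
  nlinarith [hle, heq]


lemma dv_finite {H : Type*} [Fintype H] [DecidableEq H] (ρ μv a : H → ℝ)
    (hρ0 : ∀ h, 0 ≤ ρ h) (hρ1 : ∑ h, ρ h = 1) (hμ0 : ∀ h, 0 < μv h) :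
    ∑ h, ρ h * a h ≤
      (∑ h, ρ h * Real.log (ρ h / μv h)) + Real.log (∑ h, μv h * Real.exp (a h)) := by
  classical
  set S : Finset H := {h ∈ Finset.univ | ρ h ≠ 0} with hS
  have hmemS : ∀ h, h ∈ S ↔ ρ h ≠ 0 := by intro h; simp [hS]
  have hρS : ∑ h ∈ S, ρ h = 1 := by
    rw [← hρ1]
    apply Finset.sum_subset (Finset.subset_univ S)
    intro h _ hne
    simpa [hmemS] using hne
  have hSpos : ∀ h ∈ S, 0 < ρ h := fun h hh =>
    lt_of_le_of_ne (hρ0 h) (Ne.symm ((hmemS h).1 hh))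
  -- Jensen for log
  set b : H → ℝ := fun h => μv h * Real.exp (a h) / ρ h with hb
  have hbpos : ∀ h ∈ S, b h ∈ Set.Ioi (0:ℝ) := by
    intro h hh
    exact div_pos (mul_pos (hμ0 h) (Real.exp_pos _)) (hSpos h hh)
  have jensen : ∑ h ∈ S, ρ h • Real.log (b h) ≤ Real.log (∑ h ∈ S, ρ h • b h) :=
    (strictConcaveOn_log_Ioi.concaveOn).le_map_sum (fun h hh => hρ0 h) hρS hbpos
  have hρb : ∀ h ∈ S, ρ h • b h = μv h * Real.exp (a h) := by
    intro h hh
    have := (hmemS h).1 hh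
    simp only [smul_eq_mul, hb]
    field_simp
  have hsum_eq : ∑ h ∈ S, ρ h • b h = ∑ h ∈ S, μv h * Real.exp (a h) :=
    Finset.sum_congr rfl hρb
  have hSle : ∑ h ∈ S, μv h * Real.exp (a h) ≤ ∑ h, μv h * Real.exp (a h) := by
    apply Finset.sum_le_sum_of_subset_of_nonneg (Finset.subset_univ S)
    intro h _ _
    exact le_of_lt (mul_pos (hμ0 h) (Real.exp_pos _))
  have hSnonempty : S.Nonempty := by
    by_contra hne
    rw [Finset.not_nonempty_iff_eq_empty] at hne
    rw [hne] at hρS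
    simp at hρS
  have hSsum_pos : 0 < ∑ h ∈ S, μv h * Real.exp (a h) := by
    apply Finset.sum_pos (fun h _ => mul_pos (hμ0 h) (Real.exp_pos _)) hSnonempty
  have hlog_le : Real.log (∑ h ∈ S, ρ h • b h) ≤ Real.log (∑ h, μv h * Real.exp (a h)) := by
    rw [hsum_eq]
    exact Real.log_le_log hSsum_pos hSle
  -- identify LHS of Jensen
  have hterm : ∀ h ∈ S, ρ h • Real.log (b h) = ρ h * a h - ρ h * Real.log (ρ h / μv h) := by
    intro h hh
    have hρne := (hmemS h).1 hh
    have hμne := ne_of_gt (hμ0 h)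
    rw [smul_eq_mul, hb]
    simp only
    rw [Real.log_div (by positivity) hρne, Real.log_mul hμne (Real.exp_ne_zero _),
      Real.log_exp, Real.log_div hρne hμne]
    ring
  have hL : ∑ h ∈ S, ρ h • Real.log (b h)
      = (∑ h ∈ S, ρ h * a h) - ∑ h ∈ S, ρ h * Real.log (ρ h / μv h) := by
    rw [← Finset.sum_sub_distrib]
    exact Finset.sum_congr rfl hterm
  have hA : ∑ h ∈ S, ρ h * a h = ∑ h, ρ h * a h := by
    apply Finset.sum_subset (Finset.subset_univ S)
    intro h _ hne
    have : ρ h = 0 := by simpa [hmemS] using hne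
    simp [this]
  have hKL : ∑ h ∈ S, ρ h * Real.log (ρ h / μv h) = ∑ h, ρ h * Real.log (ρ h / μv h) := by
    apply Finset.sum_subset (Finset.subset_univ S)
    intro h _ hne
    have : ρ h = 0 := by simpa [hmemS] using hne
    simp [this]
  rw [hL, hA, hKL] at jensen
  linarith [le_trans jensen hlog_le]

lemma supermart {Ω : Type*} {m0 : MeasurableSpace Ω}
    (P : Measure Ω) [IsProbabilityMeasure P]
    (ℱ : Filtration ℕ m0)
    (X : ℕ → Ω → ℝ)
    (hadapted : ∀ τ, StronglyMeasurable[ℱ τ] (X τ))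
    (hint : ∀ τ, Integrable (X τ) P)
    (hsqint : ∀ τ, Integrable (fun ω => X τ ω ^ 2) P)
    (hmds : ∀ τ, P[X (τ + 1)|ℱ τ] =ᵐ[P] 0)
    (C : ℕ → ℝ)
    (hbdd : ∀ τ, ∀ᵐ ω ∂P, |X τ ω| ≤ C τ)
    (lam : ℝ) (n : ℕ) (hb : ∀ τ, τ < n → |lam| * C (τ + 1) ≤ 1) :
    Integrable (fun ω => Real.exp (lam * ∑ τ ∈ Finset.range n, X (τ+1) ω
        - (Real.exp 1 - 2) * lam^2 * ∑ τ ∈ Finset.range n, (P[fun ω' => X (τ+1) ω'^2|ℱ τ]) ω)) P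
    ∧ ∫ ω, Real.exp (lam * ∑ τ ∈ Finset.range n, X (τ+1) ω
        - (Real.exp 1 - 2) * lam^2 * ∑ τ ∈ Finset.range n, (P[fun ω' => X (τ+1) ω'^2|ℱ τ]) ω) ∂P ≤ 1 := by
  set c : ℝ := Real.exp 1 - 2 with hc
  set M : ℕ → Ω → ℝ := fun k ω => ∑ τ ∈ Finset.range k, X (τ+1) ω with hM
  set V : ℕ → Ω → ℝ := fun k ω => ∑ τ ∈ Finset.range k, (P[fun ω' => X (τ+1) ω'^2|ℱ τ]) ω with hV
  set Z : ℕ → Ω → ℝ := fun k ω => Real.exp (lam * M k ω - c * lam^2 * V k ω) with hZ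
  have hcpos : 0 < c := by
    have : (2.7182818283 : ℝ) < Real.exp 1 := Real.exp_one_gt_d9
    simp only [hc]; linarith
  -- strong measurability of Z k w.r.t. ℱ k
  have hMsm : ∀ k, StronglyMeasurable[ℱ k] (M k) := by
    intro k
    apply Finset.stronglyMeasurable_fun_sum
    intro τ hτ
    exact (hadapted (τ+1)).mono (ℱ.mono (Finset.mem_range.1 hτ))
  have hVsm : ∀ k, StronglyMeasurable[ℱ k] (V k) := by
    intro k
    apply Finset.stronglyMeasurable_fun_sum
    intro τ hτ
    exact (stronglyMeasurable_condExp).mono (ℱ.mono (le_of_lt (Finset.mem_range.1 hτ)))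
  have hZsm : ∀ k, StronglyMeasurable[ℱ k] (Z k) := by
    intro k
    exact (Real.continuous_exp.comp_stronglyMeasurable
      (((hMsm k).const_mul lam).sub ((hVsm k).const_mul (c * lam^2))))
  -- a.e. facts
  have hVnn : ∀ k, ∀ᵐ ω ∂P, 0 ≤ V k ω := by
    intro k
    have : ∀ τ, ∀ᵐ ω ∂P, 0 ≤ (P[fun ω' => X (τ+1) ω'^2|ℱ τ]) ω := by
      intro τ
      exact condExp_nonneg (Filter.Eventually.of_forall (fun ω => sq_nonneg _))
    rw [hV]
    have := ae_all_iff.2 this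
    filter_upwards [this] with ω hω
    exact Finset.sum_nonneg (fun τ _ => hω τ)
  have hXbd : ∀ᵐ ω ∂P, ∀ τ, |X τ ω| ≤ C τ := ae_all_iff.2 hbdd
  have hZbd : ∀ k, (∀ τ, τ < k → |lam| * C (τ + 1) ≤ 1) →
      ∀ᵐ ω ∂P, Z k ω ≤ Real.exp k := by
    intro k hbk
    filter_upwards [hVnn k, hXbd] with ω hVω hXω
    have h1 : lam * M k ω ≤ k := by
      calc lam * M k ω ≤ |lam * M k ω| := le_abs_self _
        _ = |lam| * |M k ω| := abs_mul _ _
        _ ≤ |lam| * ∑ τ ∈ Finset.range k, |X (τ+1) ω| := by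
            apply mul_le_mul_of_nonneg_left _ (abs_nonneg lam)
            exact Finset.abs_sum_le_sum_abs _ _
        _ = ∑ τ ∈ Finset.range k, |lam| * |X (τ+1) ω| := Finset.mul_sum _ _ _
        _ ≤ ∑ τ ∈ Finset.range k, 1 := by
            apply Finset.sum_le_sum
            intro τ hτ
            calc |lam| * |X (τ+1) ω| ≤ |lam| * C (τ+1) :=
                  mul_le_mul_of_nonneg_left (hXω (τ+1)) (abs_nonneg lam)
              _ ≤ 1 := hbk τ (Finset.mem_range.1 hτ)
        _ = k := by simp
    have h2 : lam * M k ω - c * lam^2 * V k ω ≤ (k : ℝ) := by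
      have : 0 ≤ c * lam^2 * V k ω := by positivity
      linarith
    calc Z k ω = Real.exp (lam * M k ω - c * lam^2 * V k ω) := rfl
      _ ≤ Real.exp k := Real.exp_le_exp.2 h2
  have hZint : ∀ k, (∀ τ, τ < k → |lam| * C (τ + 1) ≤ 1) → Integrable (Z k) P := by
    intro k hbk
    apply Integrable.mono' (integrable_const (Real.exp k))
      (((hZsm k).mono (ℱ.le k)).aestronglyMeasurable)
    filter_upwards [hZbd k hbk] with ω hω
    rw [Real.norm_eq_abs, abs_of_pos (Real.exp_pos _)]
    exact hω
  refine ⟨hZint n hb, ?_⟩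
  -- induction on n for the integral bound
  induction n with
  | zero =>
      simp [hZ, hM, hV]
  | succ n ih =>
      have hbn : ∀ τ, τ < n → |lam| * C (τ + 1) ≤ 1 := fun τ hτ => hb τ (Nat.lt_succ_of_lt hτ)
      have ihn := ih hbn
      set W : Ω → ℝ := (P[fun ω' => X (n+1) ω'^2|ℱ n]) with hW
      set F : Ω → ℝ := fun ω => Z n ω * Real.exp (-(c * lam^2) * W ω) with hF
      set Y : Ω → ℝ := fun ω => Real.exp (lam * X (n+1) ω) with hY
      have hFY : F * Y = Z (n+1) := by
        funext ω
        simp only [Pi.mul_apply, hF, hY, hZ, hM, hV, Finset.sum_range_succ]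
        rw [← Real.exp_add, ← Real.exp_add]
        congr 1
        ring
      -- a.e. bound |lam * X (n+1)| ≤ 1
      have hlamX : ∀ᵐ ω ∂P, |lam * X (n+1) ω| ≤ 1 := by
        filter_upwards [hbdd (n+1)] with ω hω
        calc |lam * X (n+1) ω| = |lam| * |X (n+1) ω| := abs_mul _ _
          _ ≤ |lam| * C (n+1) := mul_le_mul_of_nonneg_left hω (abs_nonneg lam)
          _ ≤ 1 := hb n (Nat.lt_succ_self n)
      have hYint : Integrable Y P := by
        apply Integrable.mono' (integrable_const (Real.exp 1))
        · exact (Real.continuous_exp.comp_stronglyMeasurable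
            (((hadapted (n+1)).mono (ℱ.le (n+1))).const_mul lam)).aestronglyMeasurable
        · filter_upwards [hlamX] with ω hω
          rw [Real.norm_eq_abs, abs_of_pos (Real.exp_pos _)]
          exact Real.exp_le_exp.2 (le_trans (le_abs_self _) hω)
      have hFsm : StronglyMeasurable[ℱ n] F :=
        (hZsm n).mul (Real.continuous_exp.comp_stronglyMeasurable
          ((stronglyMeasurable_condExp).const_mul (-(c * lam^2))))
      have hZn1int : Integrable (Z (n+1)) P := hZint (n+1) hb
      have hFYint : Integrable (F * Y) P := by rw [hFY]; exact hZn1int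
      -- pull-out property
      have hpull : P[F * Y|ℱ n] =ᵐ[P] F * P[Y|ℱ n] :=
        condExp_mul_of_stronglyMeasurable_left hFsm hFYint hYint
      -- conditional Bernstein bound : P[Y|ℱ n] ≤ᵐ exp (c lam² W)
      have hUle : Y ≤ᵐ[P] fun ω => 1 + lam * X (n+1) ω + (c * lam^2) * X (n+1) ω^2 := by
        filter_upwards [hlamX] with ω hω
        have := exp_quad hω
        calc Y ω = Real.exp (lam * X (n+1) ω) := rfl
          _ ≤ 1 + lam * X (n+1) ω + c * (lam * X (n+1) ω)^2 := this
          _ = 1 + lam * X (n+1) ω + (c * lam^2) * X (n+1) ω^2 := by ring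
      have hUint : Integrable (fun ω => 1 + lam * X (n+1) ω + (c * lam^2) * X (n+1) ω^2) P := by
        apply Integrable.add
        apply Integrable.add (integrable_const 1)
        · exact (hint (n+1)).const_mul lam
        · exact (hsqint (n+1)).const_mul (c * lam^2)
      have hcond1 : P[Y|ℱ n] ≤ᵐ[P] P[fun ω => 1 + lam * X (n+1) ω + (c * lam^2) * X (n+1) ω^2|ℱ n] :=
        condExp_mono hYint hUint hUle
      have hcondU : P[fun ω => 1 + lam * X (n+1) ω + (c * lam^2) * X (n+1) ω^2|ℱ n]
          =ᵐ[P] fun ω => 1 + (c * lam^2) * W ω := by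
        have h0 : (fun ω => 1 + lam * X (n+1) ω + (c * lam^2) * X (n+1) ω^2)
            = ((fun _ : Ω => (1:ℝ)) + (fun ω => lam * X (n+1) ω)) + (fun ω => (c * lam^2) * X (n+1) ω^2) := by
          funext ω; simp
        rw [h0]
        have ha := condExp_add (μ := P) (m := ℱ n)
          ((integrable_const (1:ℝ)).add ((hint (n+1)).const_mul lam))
          ((hsqint (n+1)).const_mul (c * lam^2))
        have hb' := condExp_add (μ := P) (m := ℱ n)
          (integrable_const (1:ℝ)) ((hint (n+1)).const_mul lam)
        have hs1 : P[fun ω => lam * X (n+1) ω|ℱ n] =ᵐ[P] fun _ => 0 := by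
          have := condExp_smul (μ := P) (m := ℱ n) lam (X (n+1))
          have h2 : (lam • X (n+1)) = fun ω => lam * X (n+1) ω := by
            funext ω; simp [smul_eq_mul]
          rw [h2] at this
          filter_upwards [this, hmds n] with ω h3 h4
          rw [h3]
          simp [h4]
        have hs2 : P[fun ω => (c * lam^2) * X (n+1) ω^2|ℱ n]
            =ᵐ[P] fun ω => (c * lam^2) * W ω := by
          have := condExp_smul (μ := P) (m := ℱ n) (c * lam^2) (fun ω => X (n+1) ω^2)
          have h2 : ((c * lam^2) • fun ω => X (n+1) ω^2) = fun ω => (c * lam^2) * X (n+1) ω^2 := by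
            funext ω; simp [smul_eq_mul]
          rw [h2] at this
          filter_upwards [this] with ω h3
          rw [h3]
          simp [hW, smul_eq_mul]
        have hc1 : P[fun _ : Ω => (1:ℝ)|ℱ n] = fun _ => (1:ℝ) := condExp_const (ℱ.le n) 1
        filter_upwards [ha, hb', hs1, hs2] with ω ha hb' hs1 hs2
        simp only [Pi.add_apply] at ha hb' ⊢
        rw [ha, hb', hs1, hs2, hc1]
        simp
      have hcond : P[Y|ℱ n] ≤ᵐ[P] fun ω => Real.exp ((c * lam^2) * W ω) := by
        filter_upwards [hcond1, hcondU] with ω h1 h2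
        calc (P[Y|ℱ n]) ω ≤ _ := h1
          _ = 1 + (c * lam^2) * W ω := h2
          _ ≤ Real.exp ((c * lam^2) * W ω) := by
              have := Real.add_one_le_exp ((c * lam^2) * W ω)
              linarith
      -- combine
      have hkey : P[Z (n+1)|ℱ n] ≤ᵐ[P] Z n := by
        rw [← hFY]
        filter_upwards [hpull, hcond] with ω h1 h2
        rw [h1]
        have hFpos : 0 ≤ F ω := le_of_lt (mul_pos (Real.exp_pos _) (Real.exp_pos _))
        calc F ω * (P[Y|ℱ n]) ω ≤ F ω * Real.exp ((c * lam^2) * W ω) :=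
              mul_le_mul_of_nonneg_left h2 hFpos
          _ = Z n ω := by
              simp only [hF]
              rw [mul_assoc, ← Real.exp_add]
              simp
      calc ∫ ω, Z (n+1) ω ∂P = ∫ ω, (P[Z (n+1)|ℱ n]) ω ∂P :=
            (integral_condExp (ℱ.le n)).symm
        _ ≤ ∫ ω, Z n ω ∂P := integral_mono_ae integrable_condExp (hZint n hbn) hkey
        _ ≤ 1 := ihn
/-- PAC-Bayes-Bernstein inequality for multiple simultaneously evolving martingales,
over a finite index set `H`.  With probability at least `1 - δ`, simultaneously for all
`t ≥ 1` and all distributions `ρ` on `H`,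
`|M_t(ρ)| ≤ (KL(ρ‖μ_t) + 2 ln (t+1) + ln (2/δ))/λ_t + (e-2) λ_t V_t(ρ)`. -/
theorem pac_bayes_bernstein {Ω : Type*} {m0 : MeasurableSpace Ω}
    (P : Measure Ω) [IsProbabilityMeasure P]
    (ℱ : Filtration ℕ m0)
    {H : Type*} [Fintype H]
    (X : ℕ → H → Ω → ℝ)
    (hadapted : ∀ τ h, StronglyMeasurable[ℱ τ] (X τ h))
    (hint : ∀ τ h, Integrable (X τ h) P)
    (hsqint : ∀ τ h, Integrable (fun ω => X τ h ω ^ 2) P)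
    (hmds : ∀ τ h, P[X (τ + 1) h|ℱ τ] =ᵐ[P] 0)
    (C : ℕ → ℝ) (hCpos : ∀ t, 0 < C t) (hCmono : Monotone C)
    (hbdd : ∀ τ h, ∀ᵐ ω ∂P, |X τ h ω| ≤ C τ)
    (μpr : ℕ → H → ℝ) (hμ0 : ∀ t h, 0 < μpr t h) (hμ1 : ∀ t, ∑ h, μpr t h = 1)
    (lam : ℕ → ℝ) (hlam0 : ∀ t, 0 < lam t) (hlam1 : ∀ t, lam t ≤ 1 / C t)
    (δ : ℝ) (hδ0 : 0 < δ) (hδ1 : δ < 1) :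
    ENNReal.ofReal (1 - δ) ≤
      P {ω | ∀ t : ℕ, 1 ≤ t → ∀ ρ : H → ℝ, (∀ h, 0 ≤ ρ h) → ∑ h, ρ h = 1 →
        |∑ h, ρ h * ∑ τ ∈ Finset.range t, X (τ + 1) h ω| ≤
          ((∑ h, ρ h * Real.log (ρ h / μpr t h)) + 2 * Real.log (t + 1) +
              Real.log (2 / δ)) / lam t +
            (Real.exp 1 - 2) * lam t *
              ∑ h, ρ h * ∑ τ ∈ Finset.range t, (P[fun ω' => X (τ + 1) h ω' ^ 2|ℱ τ]) ω} := by
  classical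
  have hNH : Nonempty H := by
    by_contra hne
    have : ∑ h : H, μpr 0 h = 0 := by
      rw [Finset.sum_eq_zero]
      intro h _
      exact absurd ⟨h⟩ hne
    rw [hμ1 0] at this
    norm_num at this
  -- abbreviations
  set A : ℝ → ℕ → H → Ω → ℝ := fun l t h ω =>
    Real.exp (l * ∑ τ ∈ Finset.range t, X (τ+1) h ω
      - (Real.exp 1 - 2) * l^2 * ∑ τ ∈ Finset.range t, (P[fun ω' => X (τ+1) h ω'^2|ℱ τ]) ω)
    with hA
  set G : ℝ → ℕ → Ω → ℝ := fun l t ω => ∑ h, μpr t h * A l t h ω with hG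
  -- the single-martingale bound applies for |l| = lam t
  have hbC : ∀ t l, |l| = lam t → ∀ τ, τ < t → |l| * C (τ + 1) ≤ 1 := by
    intro t l hl τ hτ
    rw [hl]
    calc lam t * C (τ + 1) ≤ lam t * C t :=
          mul_le_mul_of_nonneg_left (hCmono (Nat.succ_le_of_lt hτ)) (le_of_lt (hlam0 t))
      _ ≤ (1 / C t) * C t := mul_le_mul_of_nonneg_right (hlam1 t) (le_of_lt (hCpos t))
      _ = 1 := one_div_mul_cancel (ne_of_gt (hCpos t))
  have hAkey : ∀ t l (h : H), |l| = lam t →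
      Integrable (A l t h) P ∧ ∫ ω, A l t h ω ∂P ≤ 1 := by
    intro t l h hl
    exact supermart P ℱ (fun τ => X τ h) (fun τ => hadapted τ h) (fun τ => hint τ h)
      (fun τ => hsqint τ h) (fun τ => hmds τ h) C (fun τ => hbdd τ h) l t (hbC t l hl)
  have hGint : ∀ t l, |l| = lam t → Integrable (G l t) P := by
    intro t l hl
    apply integrable_finset_sum
    intro h _
    exact ((hAkey t l h hl).1).const_mul _
  have hGnn : ∀ t l ω, 0 ≤ G l t ω := by
    intro t l ω
    exact Finset.sum_nonneg fun h _ =>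
      le_of_lt (mul_pos (hμ0 t h) (Real.exp_pos _))
  have hGpos : ∀ t l ω, 0 < G l t ω := by
    intro t l ω
    exact Finset.sum_pos (fun h _ => mul_pos (hμ0 t h) (Real.exp_pos _)) Finset.univ_nonempty
  have hGle1 : ∀ t l, |l| = lam t → ∫ ω, G l t ω ∂P ≤ 1 := by
    intro t l hl
    rw [hG]
    simp only
    rw [integral_finset_sum _ (fun h _ => ((hAkey t l h hl).1).const_mul _)]
    calc ∑ h : H, ∫ ω, μpr t h * A l t h ω ∂P
        = ∑ h : H, μpr t h * ∫ ω, A l t h ω ∂P := by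
          apply Finset.sum_congr rfl
          intro h _
          exact integral_const_mul _ _
      _ ≤ ∑ h : H, μpr t h * 1 := by
          apply Finset.sum_le_sum
          intro h _
          exact mul_le_mul_of_nonneg_left (hAkey t l h hl).2 (le_of_lt (hμ0 t h))
      _ = 1 := by simp [hμ1 t]
  -- Markov
  have hMarkov : ∀ t l, |l| = lam t →
      P {ω | 2*((t:ℝ)+1)^2/δ ≤ G l t ω} ≤ ENNReal.ofReal (δ/(2*((t:ℝ)+1)^2)) := by
    intro t l hl
    have hKpos : 0 < 2*((t:ℝ)+1)^2/δ := by positivity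
    have hm := mul_meas_ge_le_integral_of_nonneg
      (Filter.Eventually.of_forall (fun ω => hGnn t l ω)) (hGint t l hl) (2*((t:ℝ)+1)^2/δ)
    have h2 : (P {ω | 2*((t:ℝ)+1)^2/δ ≤ G l t ω}).toReal ≤ δ/(2*((t:ℝ)+1)^2) := by
      have hle1 := le_trans hm (hGle1 t l hl)
      rw [mul_comm] at hle1
      have h3 := (le_div_iff₀ hKpos).2 hle1
      rwa [one_div_div] at h3
    calc P {ω | 2*((t:ℝ)+1)^2/δ ≤ G l t ω}
        = ENNReal.ofReal ((P {ω | 2*((t:ℝ)+1)^2/δ ≤ G l t ω}).toReal) :=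
          (ENNReal.ofReal_toReal (measure_ne_top _ _)).symm
      _ ≤ ENNReal.ofReal (δ/(2*((t:ℝ)+1)^2)) := ENNReal.ofReal_le_ofReal h2
  -- bad events
  set Bad : ℕ → Set Ω := fun n =>
    {ω | 2*((n:ℝ)+2)^2/δ ≤ G (lam (n+1)) (n+1) ω} ∪
    {ω | 2*((n:ℝ)+2)^2/δ ≤ G (-(lam (n+1))) (n+1) ω} with hBad
  have hGmeas : ∀ t l, Measurable (G l t) := by
    intro t l
    apply Finset.measurable_sum
    intro h _
    apply Measurable.const_mul
    apply Measurable.exp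
    apply Measurable.sub
    · apply Measurable.const_mul
      apply Finset.measurable_sum
      intro τ _
      exact ((hadapted (τ+1) h).mono (ℱ.le (τ+1))).measurable
    · apply Measurable.const_mul
      apply Finset.measurable_sum
      intro τ _
      exact ((stronglyMeasurable_condExp).mono (ℱ.le τ)).measurable
  have hBadMeas : ∀ n, MeasurableSet (Bad n) := by
    intro n
    apply MeasurableSet.union <;>
    · exact measurableSet_le measurable_const (hGmeas _ _)
  have hcast : ∀ n : ℕ, ((n:ℝ)+2) = ((n+1 : ℕ):ℝ)+1 := by intro n; push_cast; ring
  have hBadP : ∀ n, P (Bad n) ≤ ENNReal.ofReal (δ/(((n:ℝ)+1)*((n:ℝ)+2))) := by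
    intro n
    have h1 := hMarkov (n+1) (lam (n+1)) (abs_of_pos (hlam0 (n+1)))
    have h2 := hMarkov (n+1) (-(lam (n+1))) (by rw [abs_neg]; exact abs_of_pos (hlam0 (n+1)))
    rw [← hcast n] at h1 h2
    calc P (Bad n) ≤ _ + _ := measure_union_le _ _
      _ ≤ ENNReal.ofReal (δ/(2*((n:ℝ)+2)^2)) + ENNReal.ofReal (δ/(2*((n:ℝ)+2)^2)) :=
          add_le_add h1 h2
      _ = ENNReal.ofReal (δ/(2*((n:ℝ)+2)^2) + δ/(2*((n:ℝ)+2)^2)) :=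
          (ENNReal.ofReal_add (by positivity) (by positivity)).symm
      _ ≤ ENNReal.ofReal (δ/(((n:ℝ)+1)*((n:ℝ)+2))) := by
          apply ENNReal.ofReal_le_ofReal
          rw [← add_div, div_le_div_iff₀ (by positivity) (by positivity)]
          nlinarith [hδ0.le]
  have hUnionP : P (⋃ n, Bad n) ≤ ENNReal.ofReal δ := by
    calc P (⋃ n, Bad n) ≤ ∑' n, P (Bad n) := measure_iUnion_le _
      _ ≤ ∑' n : ℕ, ENNReal.ofReal (δ/(((n:ℝ)+1)*((n:ℝ)+2))) := ENNReal.tsum_le_tsum hBadP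
      _ ≤ ENNReal.ofReal δ := by
          rw [ENNReal.tsum_eq_iSup_sum]
          apply iSup_le
          intro s
          obtain ⟨N, hN⟩ : ∃ N, s ⊆ Finset.range N := ⟨(s.sup id) + 1, fun x hx =>
            Finset.mem_range.2 (Nat.lt_succ_of_le (Finset.le_sup (f := id) hx))⟩
          calc ∑ n ∈ s, ENNReal.ofReal (δ/(((n:ℝ)+1)*((n:ℝ)+2)))
              ≤ ∑ n ∈ Finset.range N, ENNReal.ofReal (δ/(((n:ℝ)+1)*((n:ℝ)+2))) :=
                Finset.sum_le_sum_of_subset hN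
            _ = ENNReal.ofReal (∑ n ∈ Finset.range N, δ/(((n:ℝ)+1)*((n:ℝ)+2))) := by
                rw [ENNReal.ofReal_sum_of_nonneg]
                intro n _
                positivity
            _ ≤ ENNReal.ofReal δ := by
                apply ENNReal.ofReal_le_ofReal
                have hterm : ∀ n : ℕ, δ/(((n:ℝ)+1)*((n:ℝ)+2))
                    = δ/((n:ℝ)+1) - δ/((n:ℝ)+2) := by
                  intro n
                  have h1 : ((n:ℝ)+1) ≠ 0 := by positivity
                  have h2 : ((n:ℝ)+2) ≠ 0 := by positivity
                  field_simp
                  ring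
                have htel : ∑ n ∈ Finset.range N, (δ/((n:ℝ)+1) - δ/((n:ℝ)+2))
                    = δ - δ/((N:ℝ)+1) := by
                  have hsr := Finset.sum_range_sub' (f := fun n : ℕ => δ/((n:ℝ)+1)) N
                  have he : ∀ n : ℕ, δ/((n:ℝ)+1) - δ/((n:ℝ)+2)
                      = (fun n : ℕ => δ/((n:ℝ)+1)) n - (fun n : ℕ => δ/((n:ℝ)+1)) (n+1) := by
                    intro n
                    simp only
                    push_cast
                    ring_nf
                  rw [Finset.sum_congr rfl (fun n _ => he n), hsr]
                  norm_num
                rw [Finset.sum_congr rfl (fun n _ => hterm n), htel]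
                have : 0 ≤ δ/((N:ℝ)+1) := by positivity
                linarith
  -- the good event contains the complement of the bad events
  have hsub : (⋃ n, Bad n)ᶜ ⊆ {ω | ∀ t : ℕ, 1 ≤ t → ∀ ρ : H → ℝ, (∀ h, 0 ≤ ρ h) → ∑ h, ρ h = 1 →
        |∑ h, ρ h * ∑ τ ∈ Finset.range t, X (τ + 1) h ω| ≤
          ((∑ h, ρ h * Real.log (ρ h / μpr t h)) + 2 * Real.log (t + 1) +
              Real.log (2 / δ)) / lam t +
            (Real.exp 1 - 2) * lam t *
              ∑ h, ρ h * ∑ τ ∈ Finset.range t, (P[fun ω' => X (τ + 1) h ω' ^ 2|ℱ τ]) ω} := by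
    intro ω hω
    simp only [Set.mem_compl_iff, Set.mem_iUnion, not_exists] at hω
    intro t ht ρ hρ0 hρ1
    obtain ⟨n, rfl⟩ : ∃ n, t = n + 1 := ⟨t - 1, (Nat.succ_pred_eq_of_pos ht).symm⟩
    have hωn := hω n
    rw [hBad] at hωn
    simp only [Set.mem_union, Set.mem_setOf_eq, not_or, not_le] at hωn
    obtain ⟨hg1, hg2⟩ := hωn
    set t := n + 1
    set lt := lam t with hlt
    have hltpos := hlam0 t
    have hKpos : (0:ℝ) < 2*((n:ℝ)+2)^2/δ := by positivity
    have hlogK : Real.log (2*((n:ℝ)+2)^2/δ)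
        = 2 * Real.log ((n:ℝ)+2) + Real.log (2/δ) := by
      rw [Real.log_div (by positivity) (ne_of_gt hδ0),
        Real.log_mul (by norm_num) (by positivity), Real.log_pow,
        Real.log_div (by norm_num) (ne_of_gt hδ0)]
      push_cast
      ring
    -- DV for each sign
    have hDV : ∀ l : ℝ, G l t ω < 2*((n:ℝ)+2)^2/δ →
        l * (∑ h, ρ h * ∑ τ ∈ Finset.range t, X (τ + 1) h ω)
          - (Real.exp 1 - 2) * l^2 *
            (∑ h, ρ h * ∑ τ ∈ Finset.range t, (P[fun ω' => X (τ + 1) h ω' ^ 2|ℱ τ]) ω)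
          ≤ (∑ h, ρ h * Real.log (ρ h / μpr t h)) + (2 * Real.log ((n:ℝ)+2) + Real.log (2/δ)) := by
      intro l hGK
      have hdv := dv_finite ρ (μpr t)
        (fun h => l * ∑ τ ∈ Finset.range t, X (τ + 1) h ω
          - (Real.exp 1 - 2) * l^2 * ∑ τ ∈ Finset.range t, (P[fun ω' => X (τ + 1) h ω' ^ 2|ℱ τ]) ω)
        hρ0 hρ1 (hμ0 t)
      have hGid : ∑ h, μpr t h * Real.exp (l * ∑ τ ∈ Finset.range t, X (τ + 1) h ω
          - (Real.exp 1 - 2) * l^2 * ∑ τ ∈ Finset.range t, (P[fun ω' => X (τ + 1) h ω' ^ 2|ℱ τ]) ω)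
          = G l t ω := rfl
      rw [hGid] at hdv
      have hlog : Real.log (G l t ω) ≤ 2 * Real.log ((n:ℝ)+2) + Real.log (2/δ) := by
        rw [← hlogK]
        exact Real.log_le_log (hGpos t l ω) (le_of_lt hGK)
      have hexp : ∑ h, ρ h * (l * ∑ τ ∈ Finset.range t, X (τ + 1) h ω
          - (Real.exp 1 - 2) * l^2 * ∑ τ ∈ Finset.range t, (P[fun ω' => X (τ + 1) h ω' ^ 2|ℱ τ]) ω)
          = l * (∑ h, ρ h * ∑ τ ∈ Finset.range t, X (τ + 1) h ω)
          - (Real.exp 1 - 2) * l^2 *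
            (∑ h, ρ h * ∑ τ ∈ Finset.range t, (P[fun ω' => X (τ + 1) h ω' ^ 2|ℱ τ]) ω) := by
        rw [Finset.mul_sum, Finset.mul_sum, ← Finset.sum_sub_distrib]
        apply Finset.sum_congr rfl
        intro h _
        ring
      rw [hexp] at hdv
      linarith [hdv, hlog]
    have h1 := hDV lt hg1
    have h2 := hDV (-lt) hg2
    rw [neg_sq] at h2
    set Mρ := ∑ h, ρ h * ∑ τ ∈ Finset.range t, X (τ + 1) h ω with hMρ
    set Vρ := ∑ h, ρ h * ∑ τ ∈ Finset.range t, (P[fun ω' => X (τ + 1) h ω' ^ 2|ℱ τ]) ω with hVρ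
    set KL := ∑ h, ρ h * Real.log (ρ h / μpr t h) with hKL
    set B := KL + (2 * Real.log ((n:ℝ)+2) + Real.log (2/δ)) + (Real.exp 1 - 2) * lt^2 * Vρ with hB
    have habs : |lt * Mρ| ≤ B := by
      rw [hB, abs_le]
      constructor
      · nlinarith [h2]
      · nlinarith [h1]
    have habs2 : |Mρ| ≤ B / lt := by
      rw [le_div_iff₀ hltpos]
      calc |Mρ| * lt = |lt * Mρ| := by
            rw [abs_mul, abs_of_pos hltpos]; ring
        _ ≤ B := habs
    have hcast2 : ((t:ℝ) + 1) = ((n:ℝ)+2) := by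
      rw [show t = n + 1 from rfl]; push_cast; ring
    rw [hcast2]
    calc |Mρ| ≤ B / lt := habs2
      _ = (KL + 2 * Real.log ((n:ℝ)+2) + Real.log (2/δ)) / lt
          + (Real.exp 1 - 2) * lt * Vρ := by
          rw [hB]
          have hlt' : lt ≠ 0 := ne_of_gt hltpos
          field_simp
          ring
  -- conclude
  have hmeasU : MeasurableSet (⋃ n, Bad n) := MeasurableSet.iUnion hBadMeas
  have hcompl : P ((⋃ n, Bad n)ᶜ) = 1 - P (⋃ n, Bad n) := prob_compl_eq_one_sub hmeasU
  have hfinal : ENNReal.ofReal (1 - δ) ≤ P ((⋃ n, Bad n)ᶜ) := by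
    rw [hcompl]
    have heq : ENNReal.ofReal (1 - δ) = 1 - ENNReal.ofReal δ := by
      rw [← ENNReal.ofReal_one, ← ENNReal.ofReal_sub 1 hδ0.le]
    rw [heq]
    exact tsub_le_tsub_left hUnionP 1
  exact le_trans hfinal (measure_mono hsub)
end
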